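/- Let P ⊆ ℝⁿ be an open convex set, let E : P → ℝ be a concave differentiable function, let ψ₀ ∈ P, set μ₀ = ∇E(ψ₀), and let μ ∈ ℝⁿ. Suppose there exist ε ∈ (0,1) and φ_ε ∈ P with ∇E(φ_ε) = (μ − ε μ₀)/(1 − ε). Then there exists a constant C ≥ 0 such that for all φ ∈ P: ⟨φ, μ⟩ − E(φ) ≥ ε (⟨φ, μ₀⟩ − E(φ)) − C. -/

import Mathlib

/-!
The tangent-plane inequality for the concave function `E` at `φε` says that
`φ ↦ ⟨φ, ν⟩ − E φ`, with `ν = ∇E(φε)`, is minimised on `P` at `φε`. Since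
`μ = (1 − ε) ν + ε μ₀`, the functional `⟨φ, μ⟩ − E φ` splits as
`(1 − ε) (⟨φ, ν⟩ − E φ) + ε (⟨φ, μ₀⟩ − E φ)`, whose first term is bounded below.
-/

open AffineMap

theorem ConcaveOn.le_add_of_hasFDerivAt {F : Type*} [NormedAddCommGroup F] [NormedSpace ℝ F]
    {s : Set F} {f : F → ℝ} {f' : F →L[ℝ] ℝ} {x y : F} (hf : ConcaveOn ℝ s f)
    (hx : x ∈ s) (hy : y ∈ s) (hfx : HasFDerivAt f f' x) :
    f y ≤ f x + f' (y - x) := by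
  let ℓ : ℝ →ᵃ[ℝ] F := lineMap x y
  have hℓ0 : ℓ 0 = x := lineMap_apply_zero x y
  have hℓ1 : ℓ 1 = y := lineMap_apply_one x y
  have hderiv : HasDerivAt (f ∘ ℓ) (f' (y - x)) 0 :=
    (hℓ0 ▸ hfx).comp_hasDerivAt 0 hasDerivAt_lineMap
  have hslope := (hf.comp_affineMap ℓ).slope_le_of_hasDerivAt (by simpa [hℓ0])
    (by simpa [hℓ1]) one_pos hderiv
  rw [slope_def_field, Function.comp_apply, Function.comp_apply, hℓ0, hℓ1] at hslope
  linarith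

theorem ConcaveOn.le_add_inner_gradient {F : Type*} [NormedAddCommGroup F]
    [InnerProductSpace ℝ F] [CompleteSpace F]
    {s : Set F} {f : F → ℝ} {x y : F} (hf : ConcaveOn ℝ s f)
    (hx : x ∈ s) (hy : y ∈ s) (hfx : DifferentiableAt ℝ f x) :
    f y ≤ f x + inner ℝ (gradient f x) (y - x) :=
  hf.le_add_of_hasFDerivAt hx hy hfx.hasGradientAt

theorem ConcaveOn.inner_gradient_sub_le {F : Type*} [NormedAddCommGroup F]
    [InnerProductSpace ℝ F] [CompleteSpace F]
    {s : Set F} {f : F → ℝ} {x y : F} (hf : ConcaveOn ℝ s f)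
    (hx : x ∈ s) (hy : y ∈ s) (hfx : DifferentiableAt ℝ f x) :
    inner ℝ x (gradient f x) - f x ≤ inner ℝ y (gradient f x) - f y := by
  have := hf.le_add_inner_gradient hx hy hfx
  rw [inner_sub_right, real_inner_comm, real_inner_comm x] at this
  linarith

theorem coercivity_from_gradient_image {n : ℕ}
    (P : Set (EuclideanSpace ℝ (Fin n)))
    (E : EuclideanSpace ℝ (Fin n) → ℝ) (hconc : ConcaveOn ℝ P E)
    (hdiff : ∀ φ ∈ P, DifferentiableAt ℝ E φ)
    (μ μ₀ : EuclideanSpace ℝ (Fin n))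
    (ε : ℝ) (hε1 : ε < 1)
    (φε : EuclideanSpace ℝ (Fin n)) (hφε : φε ∈ P)
    (hgrad : gradient E φε = (1 - ε)⁻¹ • (μ - ε • μ₀)) :
    ∃ C : ℝ, 0 ≤ C ∧ ∀ φ ∈ P,
      ε * ((inner ℝ φ μ₀ : ℝ) - E φ) - C ≤ (inner ℝ φ μ : ℝ) - E φ := by
  set ν := gradient E φε
  have hμ : μ = (1 - ε) • ν + ε • μ₀ := by
    rw [hgrad, smul_inv_smul₀ (sub_ne_zero.2 hε1.ne')]
    abel
  set K := inner ℝ φε ν - E φε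
  refine ⟨max 0 (-((1 - ε) * K)), le_max_left _ _, fun φ hφ => ?_⟩
  have hK : (1 - ε) * K ≤ (1 - ε) * (inner ℝ φ ν - E φ) :=
    mul_le_mul_of_nonneg_left (hconc.inner_gradient_sub_le hφε hφ (hdiff φε hφε))
      (sub_nonneg.2 hε1.le)
  rw [hμ, inner_add_right, real_inner_smul_right, real_inner_smul_right]
  linarith [le_max_right 0 (-((1 - ε) * K))]
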